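/- Let u, v, w be unit vectors in ℝ³ and α, α' ∈ [0, π/2] with α ≤ α'. If ⟨u, v⟩ ≥ cos α and |⟨w, u⟩| ≤ cos(2α'), then |⟨w, v⟩| ≤ cos α'. -/
import Mathlib


open scoped RealInnerProductSpace

private lemma my_arccos_anti {x y : ℝ} (h : x ≤ y) : Real.arccos y ≤ Real.arccos x := by
  rw [Real.arccos_eq_pi_div_two_sub_arcsin, Real.arccos_eq_pi_div_two_sub_arcsin]
  have := Real.monotone_arcsin h
  linarith

theorem cone_comparison (u v w : EuclideanSpace ℝ (Fin 3))
    (hu : ‖u‖ = 1) (hv : ‖v‖ = 1) (hw : ‖w‖ = 1)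
    (α α' : ℝ) (hα0 : 0 ≤ α) (hαα' : α ≤ α') (hα' : α' ≤ Real.pi / 2)
    (h1 : ⟪u, v⟫ ≥ Real.cos α) (h2 : |⟪w, u⟫| ≤ Real.cos (2 * α')) :
    |⟪w, v⟫| ≤ Real.cos α' := by
  set a : ℝ := ⟪w, u⟫ with ha_def
  set b : ℝ := ⟪u, v⟫ with hb_def
  set c : ℝ := ⟪w, v⟫ with hc_def
  have hα'0 : 0 ≤ α' := hα0.trans hαα'
  have ha1 : |a| ≤ 1 := by
    have := abs_real_inner_le_norm w u
    rwa [hu, hw, one_mul] at this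
  have hb1 : |b| ≤ 1 := by
    have := abs_real_inner_le_norm u v
    rwa [hu, hv, one_mul] at this
  have hb0 : 0 ≤ b := le_trans (Real.cos_nonneg_of_mem_Icc ⟨by linarith, by linarith⟩) h1
  have huu : ⟪u, u⟫ = 1 := by
    rw [real_inner_self_eq_norm_sq, hu]; norm_num
  -- key inequality via Cauchy-Schwarz on orthogonal components
  have hinner : ⟪w - a • u, v - b • u⟫ = c - a * b := by
    rw [inner_sub_left, inner_sub_right, inner_sub_right, real_inner_smul_left,
      real_inner_smul_left, real_inner_smul_right, real_inner_smul_right, huu]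
    simp only [← ha_def, ← hb_def, ← hc_def]
    ring
  have hnw : ‖w - a • u‖ = Real.sqrt (1 - a ^ 2) := by
    have : ⟪w - a • u, w - a • u⟫ = 1 - a ^ 2 := by
      rw [inner_sub_left, inner_sub_right, inner_sub_right, real_inner_smul_left,
        real_inner_smul_left, real_inner_smul_right, real_inner_smul_right, huu,
        real_inner_self_eq_norm_sq, hw]
      rw [show (⟪u, w⟫ : ℝ) = a from (real_inner_comm u w).symm]
      ring
    rw [← Real.sqrt_sq (norm_nonneg _), ← real_inner_self_eq_norm_sq, this]
  have hnv : ‖v - b • u‖ = Real.sqrt (1 - b ^ 2) := by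
    have : ⟪v - b • u, v - b • u⟫ = 1 - b ^ 2 := by
      rw [inner_sub_left, inner_sub_right, inner_sub_right, real_inner_smul_left,
        real_inner_smul_left, real_inner_smul_right, real_inner_smul_right, huu,
        real_inner_self_eq_norm_sq, hv]
      rw [show (⟪v, u⟫ : ℝ) = b from real_inner_comm u v]
      ring
    rw [← Real.sqrt_sq (norm_nonneg _), ← real_inner_self_eq_norm_sq, this]
  have key : |c - a * b| ≤ Real.sqrt (1 - a ^ 2) * Real.sqrt (1 - b ^ 2) := by
    have := abs_real_inner_le_norm (w - a • u) (v - b • u)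
    rwa [hinner, hnw, hnv] at this
  -- set up the angles
  set A := Real.arccos |a| with hA_def
  set B := Real.arccos b with hB_def
  have hcosA : Real.cos A = |a| := Real.cos_arccos (by linarith [abs_nonneg a]) ha1
  have hcosB : Real.cos B = b := Real.cos_arccos (by linarith) (abs_le.mp hb1).2
  have hsinA : Real.sin A = Real.sqrt (1 - a ^ 2) := by
    rw [hA_def, Real.sin_arccos, sq_abs]
  have hsinB : Real.sin B = Real.sqrt (1 - b ^ 2) := Real.sin_arccos b
  have hAge : 2 * α' ≤ A := by
    have h2α' : Real.arccos (Real.cos (2 * α')) = 2 * α' :=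
      Real.arccos_cos (by linarith) (by linarith)
    calc 2 * α' = Real.arccos (Real.cos (2 * α')) := h2α'.symm
      _ ≤ A := my_arccos_anti h2
  have hBle : B ≤ α := by
    have hα : Real.arccos (Real.cos α) = α :=
      Real.arccos_cos hα0 (by linarith [Real.pi_pos])
    calc B ≤ Real.arccos (Real.cos α) := my_arccos_anti h1
      _ = α := hα
  have hAle : A ≤ Real.pi / 2 := Real.arccos_le_pi_div_two.mpr (abs_nonneg a)
  have hB0 : 0 ≤ B := Real.arccos_nonneg b
  have hfin : |c| ≤ Real.cos (A - B) := by
    have : |c| ≤ |a| * b + Real.sqrt (1 - a ^ 2) * Real.sqrt (1 - b ^ 2) := by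
      have h3 : |c| - |a * b| ≤ |c - a * b| := by
        have := abs_sub_abs_le_abs_sub c (a * b)
        linarith
      have h4 : |a * b| = |a| * b := by rw [abs_mul, abs_of_nonneg hb0]
      linarith
    rw [Real.cos_sub, hcosA, hcosB, hsinA, hsinB]
    linarith
  have hmono : Real.cos (A - B) ≤ Real.cos α' := by
    apply Real.cos_le_cos_of_nonneg_of_le_pi hα'0
    · linarith [Real.pi_pos]
    · linarith
  linarith
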